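/- Let ι be a finite index set, and for each i ∈ ι let (X i, μ i) be a measurable space equipped with a finite measure. Let F be a decomposable sum-product expression over ℝ≥0∞ in these variables, with every leaf function φ : X i → ℝ≥0∞ measurable. Define Z(F) ∈ ℝ≥0∞ recursively: Z of a constant leaf c is c; Z of a leaf (i, φ) is ∫⁻ φ dμ i; Z of a Product node is the product of the Z-values of its children; Z of a Sum node v with children G₁, …, G_m is ∑_k (∏_{i ∈ scope(v) \ scope(G_k)} μ i (univ)) * Z(G_k). Then ∫⁻ (eval F) d(Measure.pi μ) = (∏_{i ∈ ι \ scope(F)} μ i (univ)) * Z(F). -/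

import Mathlib

/-!
Integrate the variables out in groups, with the iterated marginals `∫⋯∫⁻_s`. The invariant
`SPF.MarginalEqZint` says that for every `s ⊇ scope F` the marginal of `F.eval` over `s` is the
constant `(∏ i ∈ s \ scope F, μ i univ) * Z(F)`. A leaf contributes its one integral and a factor
`μ i univ` for every other variable of `s`, a Sum node follows by linearity, and at a Product
node `G * H` with disjoint scopes Tonelli lets us integrate over `scope H` first, where `G` is a
constant factor. Taking `s = univ` gives the theorem; if some `X j` is empty then `μ j = 0` and
both sides vanish.
-/

open Finset MeasureTheory ENNReal

/-- A sum-product expression (SPF) over a commutative semiring `R` in variables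
indexed by `ι` with domains `X i`. -/
inductive SPF (R : Type) (ι : Type) (X : ι → Type) where
  | const : R → SPF R ι X
  | leaf : (i : ι) → (X i → R) → SPF R ι X
  | sum : List (SPF R ι X) → SPF R ι X
  | prod : List (SPF R ι X) → SPF R ι X

namespace SPF

variable {R : Type} [CommSemiring R] {ι : Type} [DecidableEq ι] {X : ι → Type}

/-- Evaluation of an SPF at a full assignment. -/
def eval : SPF R ι X → ((i : ι) → X i) → R
  | .const c, _ => c
  | .leaf i φ, x => φ (x i)
  | .sum l, x => (l.attach.map fun c => c.1.eval x).sum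
  | .prod l, x => (l.attach.map fun c => c.1.eval x).prod
decreasing_by all_goals (simp_wf; have := List.sizeOf_lt_of_mem c.2; omega)

/-- The scope of an SPF: the set of variable indices appearing in its leaves. -/
def scope : SPF R ι X → Finset ι
  | .const _ => ∅
  | .leaf i _ => {i}
  | .sum l => (l.attach.map fun c => c.1.scope).foldr (· ∪ ·) ∅
  | .prod l => (l.attach.map fun c => c.1.scope).foldr (· ∪ ·) ∅
decreasing_by all_goals (simp_wf; have := List.sizeOf_lt_of_mem c.2; omega)

/-- An SPF is decomposable iff the children of every Product node have
pairwise disjoint scopes. -/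
inductive Decomposable : SPF R ι X → Prop
  | const (c : R) : Decomposable (.const c)
  | leaf (i : ι) (φ : X i → R) : Decomposable (.leaf i φ)
  | sum {l : List (SPF R ι X)} :
      (∀ G ∈ l, Decomposable G) → Decomposable (.sum l)
  | prod {l : List (SPF R ι X)} :
      (∀ G ∈ l, Decomposable G) →
      l.Pairwise (fun G H => Disjoint G.scope H.scope) →
      Decomposable (.prod l)

/-- All leaf functions of an SPF over `ℝ≥0∞` are measurable. -/
inductive MeasurableLeaves [∀ i, MeasurableSpace (X i)] : SPF ℝ≥0∞ ι X → Prop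
  | const (c : ℝ≥0∞) : MeasurableLeaves (.const c)
  | leaf (i : ι) (φ : X i → ℝ≥0∞) : Measurable φ → MeasurableLeaves (.leaf i φ)
  | sum {l : List (SPF ℝ≥0∞ ι X)} :
      (∀ G ∈ l, MeasurableLeaves G) → MeasurableLeaves (.sum l)
  | prod {l : List (SPF ℝ≥0∞ ι X)} :
      (∀ G ∈ l, MeasurableLeaves G) → MeasurableLeaves (.prod l)

/-- The bottom-up integration pass `Z`: a constant leaf integrates to itself,
a leaf `(i, φ)` to `∫⁻ φ dμ i`, a Product node to the product of its children's
values, and a Sum node to the sum of its children's values, each multiplied by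
the total measure of the domain of the variables in the node's scope missing
from that child's scope (the factor `⊕_{X i} 1 = μ i univ`). -/
noncomputable def Zint [∀ i, MeasurableSpace (X i)]
    (μ : (i : ι) → Measure (X i)) : SPF ℝ≥0∞ ι X → ℝ≥0∞
  | .const c => c
  | .leaf i φ => ∫⁻ t, φ t ∂(μ i)
  | .prod l => (l.attach.map fun c => c.1.Zint μ).prod
  | .sum l => (l.attach.map fun c =>
      (∏ i ∈ (SPF.sum l).scope \ c.1.scope, μ i Set.univ) * c.1.Zint μ).sum
decreasing_by all_goals (simp_wf; have := List.sizeOf_lt_of_mem c.2; omega)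

end SPF

open Set

theorem List.mem_foldr_union {α : Type*} [DecidableEq α] {L : List (Finset α)} {a : α} :
    a ∈ L.foldr (· ∪ ·) ∅ ↔ ∃ s ∈ L, a ∈ s := by
  induction L <;> simp [*]

namespace MeasureTheory

variable {δ : Type*} [DecidableEq δ] {X : δ → Type*} [∀ i, MeasurableSpace (X i)]
  (μ : ∀ i, Measure (X i)) (s : Finset δ)

theorem lmarginal_const [∀ i, SigmaFinite (μ i)] (c : ℝ≥0∞) :
    ∫⋯∫⁻_s, (fun _ => c) ∂μ = fun _ => (∏ i ∈ s, μ i univ) * c := by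
  ext x
  rw [lmarginal, lintegral_const, Measure.pi_univ, mul_comm, Finset.prod_coe_sort s (μ · univ)]

theorem lmarginal_list_sum {α : Type*} (l : List α) {f : α → (∀ i, X i) → ℝ≥0∞}
    (hf : ∀ a ∈ l, Measurable (f a)) :
    ∫⋯∫⁻_s, (fun x => (l.map (f · x)).sum) ∂μ =
      fun x => (l.map fun a => (∫⋯∫⁻_s, f a ∂μ) x).sum := by
  ext x
  induction l with
  | nil => simp [lmarginal]
  | cons a l ih =>
    rw [List.forall_mem_cons] at hf
    simp only [List.map_cons, List.sum_cons, ← ih hf.2]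
    exact lintegral_add_left (hf.1.comp measurable_updateFinset) _

theorem lmarginal_mul_left_of_dependsOn {f g : (∀ i, X i) → ℝ≥0∞} (hf : DependsOn f (↑s)ᶜ)
    (hg : Measurable g) :
    ∫⋯∫⁻_s, (fun x => f x * g x) ∂μ = fun x => f x * (∫⋯∫⁻_s, g ∂μ) x := by
  ext x
  have hfx : ∀ y, f (Function.updateFinset x s y) = f x := fun y =>
    hf fun i hi => by simp [Function.updateFinset, show i ∉ s from hi]
  simp only [lmarginal, hfx]
  exact lintegral_const_mul _ (hg.comp measurable_updateFinset)

theorem lmarginal_mul_const {f : (∀ i, X i) → ℝ≥0∞} (hf : Measurable f) (c : ℝ≥0∞) :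
    ∫⋯∫⁻_s, (fun x => f x * c) ∂μ = fun x => (∫⋯∫⁻_s, f ∂μ) x * c := by
  ext x
  exact lintegral_mul_const _ (hf.comp measurable_updateFinset)

end MeasureTheory

namespace SPF

variable {R : Type} {ι : Type} {X : ι → Type}

@[elab_as_elim]
theorem induction_mem {motive : SPF R ι X → Prop} (const : ∀ c, motive (.const c))
    (leaf : ∀ i φ, motive (.leaf i φ)) (sum : ∀ l, (∀ G ∈ l, motive G) → motive (.sum l))
    (prod : ∀ l, (∀ G ∈ l, motive G) → motive (.prod l)) : ∀ F, motive F
  | .const c => const c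
  | .leaf i φ => leaf i φ
  | .sum l => sum l fun G _ => induction_mem const leaf sum prod G
  | .prod l => prod l fun G _ => induction_mem const leaf sum prod G
decreasing_by all_goals (simp_wf; have := List.sizeOf_lt_of_mem ‹G ∈ l›; omega)

section Eval

variable [CommSemiring R]

@[simp] theorem eval_const (c : R) (x : ∀ i, X i) : (const c : SPF R ι X).eval x = c := by
  simp [eval]

@[simp] theorem eval_leaf (i : ι) (φ : X i → R) (x : ∀ i, X i) :
    (leaf i φ).eval x = φ (x i) := by
  simp [eval]

@[simp] theorem eval_sum (l : List (SPF R ι X)) (x : ∀ i, X i) :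
    (sum l).eval x = (l.map (·.eval x)).sum := by
  simp [eval]

@[simp] theorem eval_prod (l : List (SPF R ι X)) (x : ∀ i, X i) :
    (prod l).eval x = (l.map (·.eval x)).prod := by
  simp [eval]

theorem eval_prod_cons (G : SPF R ι X) (l : List (SPF R ι X)) (x : ∀ i, X i) :
    (prod (G :: l)).eval x = G.eval x * (prod l).eval x := by
  simp

end Eval

section Scope

variable [DecidableEq ι]

@[simp] theorem scope_const (c : R) : (const c : SPF R ι X).scope = ∅ := by simp [scope]

@[simp] theorem scope_leaf (i : ι) (φ : X i → R) : (leaf i φ).scope = {i} := by simp [scope]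

theorem mem_scope_sum {l : List (SPF R ι X)} {j : ι} :
    j ∈ (sum l).scope ↔ ∃ G ∈ l, j ∈ G.scope := by
  simp [scope, List.mem_foldr_union]

theorem mem_scope_prod {l : List (SPF R ι X)} {j : ι} :
    j ∈ (prod l).scope ↔ ∃ G ∈ l, j ∈ G.scope := by
  simp [scope, List.mem_foldr_union]

theorem scope_subset_scope_sum {l : List (SPF R ι X)} {G : SPF R ι X} (hG : G ∈ l) :
    G.scope ⊆ (sum l).scope :=
  fun _ hj => mem_scope_sum.2 ⟨G, hG, hj⟩

theorem scope_subset_scope_prod {l : List (SPF R ι X)} {G : SPF R ι X} (hG : G ∈ l) :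
    G.scope ⊆ (prod l).scope :=
  fun _ hj => mem_scope_prod.2 ⟨G, hG, hj⟩

theorem scope_prod_cons (G : SPF R ι X) (l : List (SPF R ι X)) :
    (prod (G :: l)).scope = G.scope ∪ (prod l).scope := by
  ext j
  simp [mem_scope_prod]

theorem disjoint_scope_prod {s : Finset ι} {l : List (SPF R ι X)}
    (h : ∀ G ∈ l, Disjoint s G.scope) : Disjoint s (prod l).scope :=
  Finset.disjoint_left.2 fun j hjs hjl => by
    obtain ⟨G, hG, hjG⟩ := mem_scope_prod.1 hjl
    exact Finset.disjoint_left.1 (h G hG) hjs hjG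

theorem dependsOn_eval [CommSemiring R] (F : SPF R ι X) : DependsOn F.eval F.scope := by
  induction F using induction_mem with
  | const c => simp [DependsOn]
  | leaf i φ => intro x y h; simp [h i (by simp)]
  | sum l ih =>
    intro x y h
    simp only [eval_sum]
    exact congrArg _ <| List.map_congr_left fun G hG =>
      ih G hG fun j hj => h j (scope_subset_scope_sum hG hj)
  | prod l ih =>
    intro x y h
    simp only [eval_prod]
    exact congrArg _ <| List.map_congr_left fun G hG =>
      ih G hG fun j hj => h j (scope_subset_scope_prod hG hj)

end Scope

section Measure

variable [∀ i, MeasurableSpace (X i)]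

theorem measurable_eval {F : SPF ℝ≥0∞ ι X} (hm : F.MeasurableLeaves) : Measurable F.eval := by
  induction hm with
  | const c => simp only [funext (eval_const c), measurable_const]
  | leaf i φ hφ =>
    rw [funext (eval_leaf i φ)]
    exact hφ.comp (measurable_pi_apply i)
  | @sum l _ ih =>
    have hl : ∀ f ∈ l.map eval, Measurable f := by simpa using ih
    simpa [funext (eval_sum l), Function.comp_def] using List.measurable_fun_sum _ hl
  | @prod l _ ih =>
    have hl : ∀ f ∈ l.map eval, Measurable f := by simpa using ih
    simpa [funext (eval_prod l), Function.comp_def] using List.measurable_fun_prod _ hl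

variable [DecidableEq ι] (μ : ∀ i, Measure (X i))

@[simp] theorem Zint_const (c : ℝ≥0∞) : (const c : SPF ℝ≥0∞ ι X).Zint μ = c := by simp [Zint]

@[simp] theorem Zint_leaf (i : ι) (φ : X i → ℝ≥0∞) : (leaf i φ).Zint μ = ∫⁻ t, φ t ∂μ i := by
  simp [Zint]

theorem Zint_sum (l : List (SPF ℝ≥0∞ ι X)) :
    (sum l).Zint μ =
      (l.map fun G => (∏ i ∈ (sum l).scope \ G.scope, μ i univ) * G.Zint μ).sum := by
  simp [Zint]

theorem Zint_prod (l : List (SPF ℝ≥0∞ ι X)) : (prod l).Zint μ = (l.map (·.Zint μ)).prod := by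
  simp [Zint]

theorem Zint_prod_cons (G : SPF ℝ≥0∞ ι X) (l : List (SPF ℝ≥0∞ ι X)) :
    (prod (G :: l)).Zint μ = G.Zint μ * (prod l).Zint μ := by
  simp [Zint_prod]

variable {μ} in
theorem Zint_eq_zero_of_mem_scope {j : ι} (hj0 : μ j univ = 0) {F : SPF ℝ≥0∞ ι X}
    (hjF : j ∈ F.scope) : F.Zint μ = 0 := by
  induction F using induction_mem with
  | const c => simp at hjF
  | leaf i φ =>
    obtain rfl : j = i := by simpa using hjF
    simp [Measure.measure_univ_eq_zero.1 hj0]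
  | sum l ih =>
    refine (Zint_sum μ l).trans (List.sum_eq_zero fun _ ht => ?_)
    obtain ⟨G, hG, rfl⟩ := List.mem_map.1 ht
    by_cases hjG : j ∈ G.scope
    · rw [ih G hG hjG, mul_zero]
    · rw [Finset.prod_eq_zero (Finset.mem_sdiff.2 ⟨hjF, hjG⟩) hj0, zero_mul]
  | prod l ih =>
    obtain ⟨G, hG, hjG⟩ := mem_scope_prod.1 hjF
    exact (Zint_prod μ l).trans (List.prod_eq_zero (List.mem_map.2 ⟨G, hG, ih G hG hjG⟩))

def MarginalEqZint (F : SPF ℝ≥0∞ ι X) : Prop :=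
  ∀ s, F.scope ⊆ s → ∫⋯∫⁻_s, F.eval ∂μ = fun _ => (∏ i ∈ s \ F.scope, μ i univ) * F.Zint μ

theorem marginalEqZint_sum {l : List (SPF ℝ≥0∞ ι X)} (hm : ∀ G ∈ l, Measurable G.eval)
    (ih : ∀ G ∈ l, MarginalEqZint μ G) : MarginalEqZint μ (sum l) := by
  intro s hs
  have hsplit : ∀ G ∈ l, ∏ i ∈ s \ G.scope, μ i univ =
      (∏ i ∈ s \ (sum l).scope, μ i univ) * ∏ i ∈ (sum l).scope \ G.scope, μ i univ := by
    intro G hG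
    rw [← Finset.prod_union (Finset.sdiff_disjoint.mono_right Finset.sdiff_subset),
      Finset.sdiff_union_sdiff_cancel hs (scope_subset_scope_sum hG)]
  ext x
  rw [funext (eval_sum l), lmarginal_list_sum μ s l hm, Zint_sum, ← List.sum_map_mul_left]
  refine congrArg List.sum (List.map_congr_left fun G hG => ?_)
  rw [ih G hG s ((scope_subset_scope_sum hG).trans hs), hsplit G hG, mul_assoc]

variable [∀ i, SigmaFinite (μ i)]

theorem marginalEqZint_const (c : ℝ≥0∞) : MarginalEqZint μ (const c : SPF ℝ≥0∞ ι X) := by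
  intro s _
  simp only [funext (eval_const (X := X) c), lmarginal_const, scope_const, Finset.sdiff_empty,
    Zint_const]

theorem marginalEqZint_leaf {i : ι} {φ : X i → ℝ≥0∞} (hφ : Measurable φ) :
    MarginalEqZint μ (leaf i φ) := by
  intro s hs
  have hi : i ∈ s := by simpa using hs
  rw [lmarginal_erase' _ (measurable_eval (.leaf i φ hφ)) hi]
  simp only [eval_leaf, Function.update_self, lmarginal_const, scope_leaf, Zint_leaf,
    Finset.sdiff_singleton_eq_erase]

theorem marginalEqZint_prod_nil : MarginalEqZint μ (prod [] : SPF ℝ≥0∞ ι X) := by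
  intro s _
  simp [funext (eval_prod (X := X) []), lmarginal_const, Zint_prod, scope]

theorem marginalEqZint_prod_cons {G : SPF ℝ≥0∞ ι X} {l : List (SPF ℝ≥0∞ ι X)}
    (hdisj : Disjoint G.scope (prod l).scope) (hG : Measurable G.eval)
    (hl : Measurable (prod l).eval) (ihG : MarginalEqZint μ G)
    (ihl : MarginalEqZint μ (prod l)) : MarginalEqZint μ (prod (G :: l)) := by
  intro s hs
  rw [scope_prod_cons, Finset.union_subset_iff] at hs
  have hG_indep : DependsOn G.eval (↑(prod l).scope)ᶜ :=
    (dependsOn_eval G).mono fun j hj => Finset.disjoint_left.1 hdisj hj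
  have hinner : ∫⋯∫⁻_(prod l).scope, (fun x => G.eval x * (prod l).eval x) ∂μ =
      fun x => G.eval x * (prod l).Zint μ := by
    rw [lmarginal_mul_left_of_dependsOn μ _ hG_indep hl, ihl _ subset_rfl]
    simp
  calc ∫⋯∫⁻_s, (prod (G :: l)).eval ∂μ
      = ∫⋯∫⁻_(s \ (prod l).scope),
          ∫⋯∫⁻_(prod l).scope, (fun x => G.eval x * (prod l).eval x) ∂μ ∂μ := by
        rw [funext (eval_prod_cons G l)]
        conv_lhs => rw [← Finset.sdiff_union_of_subset hs.2]
        exact lmarginal_union μ _ (hG.mul hl) Finset.sdiff_disjoint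
    _ = fun _ => (∏ i ∈ (s \ (prod l).scope) \ G.scope, μ i univ) * G.Zint μ *
          (prod l).Zint μ := by
        rw [hinner, lmarginal_mul_const μ _ hG, ihG _ (Finset.subset_sdiff.2 ⟨hs.1, hdisj⟩)]
    _ = _ := by
        rw [scope_prod_cons, Zint_prod_cons, sdiff_sdiff_left, Finset.sup_eq_union,
          Finset.union_comm G.scope, mul_assoc]

theorem Decomposable.marginalEqZint {F : SPF ℝ≥0∞ ι X} (hdec : F.Decomposable)
    (hm : F.MeasurableLeaves) : MarginalEqZint μ F := by
  induction hdec with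
  | const c => exact marginalEqZint_const μ c
  | leaf i φ => cases hm with | leaf _ _ hφ => exact marginalEqZint_leaf μ hφ
  | sum _ ih =>
    cases hm with
    | sum hm =>
      exact marginalEqZint_sum μ (fun G hG => measurable_eval (hm G hG))
        fun G hG => ih G hG (hm G hG)
  | @prod l hdecs hpw ih =>
    cases hm with
    | prod hm =>
      induction l with
      | nil => exact marginalEqZint_prod_nil μ
      | cons G l ihl =>
        rw [List.forall_mem_cons] at hdecs hm ih
        exact marginalEqZint_prod_cons μ (disjoint_scope_prod (List.pairwise_cons.1 hpw).1)
          (measurable_eval hm.1) (measurable_eval (.prod hm.2)) (ih.1 hm.1)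
          (ihl hdecs.2 hpw.of_cons ih.2 hm.2)

end Measure

end SPF

/-- Corollary 6 (every decomposable SPF of real variables can be integrated in
time linear in its size), under condition (C2) that the variable domains have
finite measure: the Lebesgue integral of a decomposable SPF over `ℝ≥0∞` with
measurable leaves, with respect to the product measure, equals its linear-time
bottom-up integration pass `Z`, times the total measure of the domains of the
variables missing from its scope. -/
theorem lintegral_decomposable_spf
    {ι : Type} [Fintype ι] [DecidableEq ι] {X : ι → Type}
    [∀ i, MeasurableSpace (X i)]
    (μ : (i : ι) → Measure (X i)) [∀ i, IsFiniteMeasure (μ i)]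
    (F : SPF ℝ≥0∞ ι X) (hdec : F.Decomposable) (hm : F.MeasurableLeaves) :
    ∫⁻ x, F.eval x ∂(Measure.pi μ) =
      (∏ i ∈ (F.scope)ᶜ, μ i Set.univ) * F.Zint μ := by
  rcases isEmpty_or_nonempty ((i : ι) → X i) with hempty | hne
  · obtain ⟨j, hj⟩ := isEmpty_pi.1 hempty
    have hμj : μ j univ = 0 := by simp [Measure.eq_zero_of_isEmpty (μ j)]
    rw [Measure.eq_zero_of_isEmpty (Measure.pi μ), lintegral_zero_measure]
    by_cases hjF : j ∈ F.scope
    · rw [SPF.Zint_eq_zero_of_mem_scope hμj hjF, mul_zero]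
    · rw [Finset.prod_eq_zero (Finset.mem_compl.2 hjF) hμj, zero_mul]
  · obtain ⟨x⟩ := hne
    rw [lintegral_eq_lmarginal_univ x, hdec.marginalEqZint μ hm _ (Finset.subset_univ _),
      Finset.compl_eq_univ_sdiff]
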